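/- arXiv:1212.0266 — 9 statements merged into one kernel-verified Lean document; each statement's English description precedes it below -/
import Mathlib

section
/- Let (R, D) be a commutative differential k-algebra of weight λ (D linear, D(xy) = D(x)y + xD(y) + λD(x)D(y), D(1)=0) with a linear operator Π: R → R satisfying D∘Π = id_R. Set J = Π∘D. Then the Rota-Baxter identity Π(x)Π(y) = Π(xΠ(y)) + Π(Π(x)y) + λΠ(xy) holds for all x,y if and only if Π(x)Π(y) = J(Π(x)Π(y)) for all x,y. -/
theorem section_derivation_mul_section_eq {k R : Type*} [CommRing k] [CommRing R] [Algebra k R]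
    (l : k) (D P : R →ₗ[k] R)
    (hleib : ∀ x y, D (x * y) = D x * y + x * D y + l • (D x * D y))
    (hsec : ∀ x, D (P x) = x) (x y : R) :
    P (D (P x * P y)) = P (x * P y) + P (P x * y) + l • P (x * y) := by
  rw [hleib, hsec, hsec, map_add, map_add, map_smul]

theorem stmt_2_general {k R : Type*} [CommRing k] [CommRing R] [Algebra k R]
    (l : k) (D P : R →ₗ[k] R)
    (hleib : ∀ x y, D (x * y) = D x * y + x * D y + l • (D x * D y))
    (hsec : ∀ x, D (P x) = x) :
    (∀ x y, P x * P y = P (x * P y) + P (P x * y) + l • P (x * y)) ↔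
      (∀ x y, P x * P y = P (D (P x * P y))) :=
  forall₂_congr fun x y => by rw [section_derivation_mul_section_eq l D P hleib hsec]

/-- With J = Π∘D, the Rota-Baxter identity for Π is equivalent to
Π(x)Π(y) = J(Π(x)Π(y)). -/
theorem stmt_2 {k R : Type*} [CommRing k] [CommRing R] [Algebra k R]
    (l : k) (D P : R →ₗ[k] R)
    (hleib : ∀ x y, D (x * y) = D x * y + x * D y + l • (D x * D y))
    (hone : D 1 = 0)
    (hsec : ∀ x, D (P x) = x) :
    (∀ x y, P x * P y = P (x * P y) + P (P x * y) + l • P (x * y)) ↔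
      (∀ x y, P x * P y = P (D (P x * P y))) :=
  stmt_2_general l D P hleib hsec
end

section
/- Let (R, D) be a commutative differential k-algebra of weight λ with a linear operator Π satisfying D∘Π = id_R, and set J = Π∘D. Then Π(x)Π(y) = J(Π(x)Π(y)) holds for all x, y ∈ R if and only if J(x)J(y) = J(J(x)J(y)) holds for all x, y ∈ R. -/
theorem stmt_3_general {k R : Type*} [CommRing k] [CommRing R] [Algebra k R]
    (D P : R →ₗ[k] R)
    (hsec : ∀ x, D (P x) = x) :
    (∀ x y, P x * P y = P (D (P x * P y))) ↔
      (∀ x y, P (D x) * P (D y) = P (D (P (D x) * P (D y)))) := by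
  refine ⟨fun h x y => h (D x) (D y), fun h x y => ?_⟩
  simpa only [hsec] using h (P x) (P y)

/-- With J = Π∘D: Π(x)Π(y) = J(Π(x)Π(y)) for all x,y iff
J(x)J(y) = J(J(x)J(y)) for all x,y. -/
theorem stmt_3 {k R : Type*} [CommRing k] [CommRing R] [Algebra k R]
    (l : k) (D P : R →ₗ[k] R)
    (hleib : ∀ x y, D (x * y) = D x * y + x * D y + l • (D x * D y))
    (hone : D 1 = 0)
    (hsec : ∀ x, D (P x) = x) :
    (∀ x y, P x * P y = P (D (P x * P y))) ↔
      (∀ x y, P (D x) * P (D y) = P (D (P (D x) * P (D y)))) :=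
  stmt_3_general D P hsec
end

section
/- Every commutative integro-differential k-algebra of weight λ is a differential Rota-Baxter algebra of weight λ; that is, if (R, D, Π) satisfies D∘Π = id_R and the hybrid Rota-Baxter axiom Π(D(x))Π(D(y)) = Π(D(x))y + xΠ(D(y)) - Π(D(xy)) for all x, y, then Π satisfies the Rota-Baxter identity Π(x)Π(y) = Π(xΠ(y)) + Π(Π(x)y) + λΠ(xy) for all x, y. -/
/-!
Applied to `P x` and `P y`, the hybrid axiom says, since `D ∘ P = id`, that `P (D (P x * P y)) = P x * P y`.
Expanding `D (P x * P y)` by the weighted Leibniz rule and using `D ∘ P = id` once more turns the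
left-hand side into `P (x * P y) + P (P x * y) + l • P (x * y)`.
-/

section

variable {k R : Type*} [CommRing k] [CommRing R] [Module k R]

theorem deriv_integral_mul_integral (l : k) {D P : R → R}
    (hleib : ∀ x y, D (x * y) = D x * y + x * D y + l • (D x * D y))
    (hsec : ∀ x, D (P x) = x) (x y : R) :
    D (P x * P y) = x * P y + P x * y + l • (x * y) := by
  rw [hleib, hsec, hsec]

theorem integral_deriv_integral_mul_integral {D P : R → R} (hsec : ∀ x, D (P x) = x)
    (hhybrid : ∀ x y, P (D x) * P (D y) = P (D x) * y + x * P (D y) - P (D (x * y)))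
    (x y : R) :
    P (D (P x * P y)) = P x * P y := by
  have h := hhybrid (P x) (P y)
  rw [hsec, hsec] at h
  linear_combination h

end

theorem stmt_4_general {k R : Type*} [CommRing k] [CommRing R] [Algebra k R]
    (l : k) (D P : R →ₗ[k] R)
    (hleib : ∀ x y, D (x * y) = D x * y + x * D y + l • (D x * D y))
    (hsec : ∀ x, D (P x) = x)
    (hhybrid : ∀ x y, P (D x) * P (D y) =
      P (D x) * y + x * P (D y) - P (D (x * y))) :
    ∀ x y, P x * P y = P (x * P y) + P (P x * y) + l • P (x * y) := by
  intro x y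
  have hfix := integral_deriv_integral_mul_integral hsec hhybrid x y
  rw [deriv_integral_mul_integral l hleib hsec, map_add, map_add, map_smul] at hfix
  exact hfix.symm

/-- Every commutative integro-differential k-algebra of weight λ is a
differential Rota-Baxter algebra of weight λ. -/
theorem stmt_4 {k R : Type*} [CommRing k] [CommRing R] [Algebra k R]
    (l : k) (D P : R →ₗ[k] R)
    (hleib : ∀ x y, D (x * y) = D x * y + x * D y + l • (D x * D y))
    (hone : D 1 = 0)
    (hsec : ∀ x, D (P x) = x)
    (hhybrid : ∀ x y, P (D x) * P (D y) =
      P (D x) * y + x * P (D y) - P (D (x * y))) :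
    ∀ x y, P x * P y = P (x * P y) + P (P x * y) + l • P (x * y) :=
  stmt_4_general l D P hleib hsec hhybrid
end

section
/- Let (R, D, Π) with D a weight-λ derivation and D∘Π = id_R, J = Π∘D. Then the hybrid Rota-Baxter axiom (J(x)J(y) = J(x)y + xJ(y) − J(xy) for all x,y) holds if and only if J(xJ(y)) = xJ(y) and J(J(x)y) = J(x)y hold for all x, y ∈ R. -/
/-!
Since `D ∘ Π = id`, the operator `J = Π ∘ D` is idempotent and `D ∘ J = D`. Idempotence turns the
hybrid axiom at `(x, J y)` and `(J x, y)` into the two fixed-point identities. Conversely, apply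
`Π` to the weight-`λ` Leibniz rule for `x * J y`, `J x * y` and `J x * J y`: because `D (J z) = D z`,
the first two expansions minus the third is exactly `Π` applied to the Leibniz rule for `x * y`,
which is the hybrid axiom.
-/

section

variable {R : Type*} [CommRing R]

def IsHybridRotaBaxter (J : R → R) : Prop :=
  ∀ x y, J x * J y = J x * y + x * J y - J (x * y)

namespace IsHybridRotaBaxter

variable {J : R → R}

theorem apply_mul_apply_right (hJ : IsHybridRotaBaxter J) (hidem : ∀ x, J (J x) = J x)
    (x y : R) : J (x * J y) = x * J y := by
  have h := hJ x (J y)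
  rw [hidem] at h
  linear_combination h

theorem apply_apply_mul (hJ : IsHybridRotaBaxter J) (hidem : ∀ x, J (J x) = J x)
    (x y : R) : J (J x * y) = J x * y := by
  have h := hJ (J x) y
  rw [hidem] at h
  linear_combination h

end IsHybridRotaBaxter

theorem isHybridRotaBaxter_of_apply_mul_apply {k : Type*} [CommRing k] [Algebra k R] {l : k}
    {D P : R →ₗ[k] R} (hleib : ∀ x y, D (x * y) = D x * y + x * D y + l • (D x * D y))
    (hsec : ∀ x, D (P x) = x)
    (hright : ∀ x y, P (D (x * P (D y))) = x * P (D y))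
    (hleft : ∀ x y, P (D (P (D x) * y)) = P (D x) * y) :
    IsHybridRotaBaxter fun x => P (D x) := by
  intro x y
  have hxJy := hright x y
  have hJxy := hleft x y
  have hJxJy := hleft x (P (D y))
  simp only [hleib, hsec, map_add, map_smul] at hxJy hJxy hJxJy ⊢
  linear_combination hxJy + hJxy - hJxJy

end

theorem stmt_7_general {k R : Type*} [CommRing k] [CommRing R] [Algebra k R]
    (l : k) (D P : R →ₗ[k] R)
    (hleib : ∀ x y, D (x * y) = D x * y + x * D y + l • (D x * D y))
    (hsec : ∀ x, D (P x) = x) :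
    (∀ x y, P (D x) * P (D y) =
        P (D x) * y + x * P (D y) - P (D (x * y))) ↔
      ((∀ x y, P (D (x * P (D y))) = x * P (D y)) ∧
        (∀ x y, P (D (P (D x) * y)) = P (D x) * y)) := by
  have hidem : ∀ x, P (D (P (D x))) = P (D x) := fun x => by rw [hsec]
  constructor
  · intro h
    exact ⟨IsHybridRotaBaxter.apply_mul_apply_right (J := fun x => P (D x)) h hidem,
      IsHybridRotaBaxter.apply_apply_mul (J := fun x => P (D x)) h hidem⟩
  · rintro ⟨hright, hleft⟩
    exact isHybridRotaBaxter_of_apply_mul_apply hleib hsec hright hleft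

/-- With J = Π∘D: the hybrid Rota-Baxter axiom holds iff
J(xJ(y)) = xJ(y) and J(J(x)y) = J(x)y for all x, y. -/
theorem stmt_7 {k R : Type*} [CommRing k] [CommRing R] [Algebra k R]
    (l : k) (D P : R →ₗ[k] R)
    (hleib : ∀ x y, D (x * y) = D x * y + x * D y + l • (D x * D y))
    (hone : D 1 = 0)
    (hsec : ∀ x, D (P x) = x) :
    (∀ x y, P (D x) * P (D y) =
        P (D x) * y + x * P (D y) - P (D (x * y))) ↔
      ((∀ x y, P (D (x * P (D y))) = x * P (D y)) ∧
        (∀ x y, P (D (P (D x) * y)) = P (D x) * y)) :=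
  stmt_7_general l D P hleib hsec
end

section
/- Let (R, D, Π) with D a weight-λ derivation and D∘Π = id_R. Then the hybrid Rota-Baxter axiom holds if and only if the weighted integration-by-parts identities hold: xΠ(y) = Π(D(x)Π(y)) + Π(xy) + λΠ(D(x)y) and Π(x)y = Π(Π(x)D(y)) + Π(xy) + λΠ(xD(y)) for all x, y ∈ R. -/
/-!
Expanding with the Leibniz rule and `D ∘ P = id`, the right-hand sides of the two
integration-by-parts identities are `P (D (x * P y))` and `P (D (P x * y))`, so the identities say
that `P ∘ D` fixes every product with a factor in the image of `P`. The hybrid axiom at `(x, P y)`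
says exactly this. Conversely, expanding `P (D (x * y))` and applying the identities at
`(P (D x), D y)`, `(D x, y)` and `(x, D y)` yields the hybrid axiom.
-/

section

variable {k R : Type*} [CommRing k] [CommRing R] [Algebra k R] {l : k} {D P : R →ₗ[k] R}

theorem P_D_mul (hleib : ∀ x y, D (x * y) = D x * y + x * D y + l • (D x * D y)) (x y : R) :
    P (D (x * y)) = P (D x * y) + P (x * D y) + l • P (D x * D y) := by
  rw [hleib, map_add, map_add, map_smul]

theorem P_D_mul_P (hleib : ∀ x y, D (x * y) = D x * y + x * D y + l • (D x * D y))
    (hsec : ∀ x, D (P x) = x) (x y : R) :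
    P (D (x * P y)) = P (D x * P y) + P (x * y) + l • P (D x * y) := by
  rw [P_D_mul hleib, hsec]

theorem P_D_P_mul (hleib : ∀ x y, D (x * y) = D x * y + x * D y + l • (D x * D y))
    (hsec : ∀ x, D (P x) = x) (x y : R) :
    P (D (P x * y)) = P (P x * D y) + P (x * y) + l • P (x * D y) := by
  rw [P_D_mul hleib, hsec]
  abel

theorem P_D_mul_P_of_hybrid (hsec : ∀ x, D (P x) = x)
    (h : ∀ x y, P (D x) * P (D y) = P (D x) * y + x * P (D y) - P (D (x * y))) (x y : R) :
    P (D (x * P y)) = x * P y := by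
  have hxy := h x (P y)
  rw [hsec] at hxy
  linear_combination hxy

theorem hybrid_of_integration_by_parts
    (hleib : ∀ x y, D (x * y) = D x * y + x * D y + l • (D x * D y))
    (hsec : ∀ x, D (P x) = x)
    (h₁ : ∀ x y, x * P y = P (D x * P y) + P (x * y) + l • P (D x * y))
    (h₂ : ∀ x y, P x * y = P (P x * D y) + P (x * y) + l • P (x * D y)) (x y : R) :
    P (D x) * P (D y) = P (D x) * y + x * P (D y) - P (D (x * y)) := by
  have e₁ := h₁ (P (D x)) (D y)
  rw [hsec] at e₁
  rw [P_D_mul hleib]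
  linear_combination e₁ - h₂ (D x) y - h₁ x (D y)

end

theorem stmt_8_general {k R : Type*} [CommRing k] [CommRing R] [Algebra k R]
    (l : k) (D P : R →ₗ[k] R)
    (hleib : ∀ x y, D (x * y) = D x * y + x * D y + l • (D x * D y))
    (hsec : ∀ x, D (P x) = x) :
    (∀ x y, P (D x) * P (D y) =
        P (D x) * y + x * P (D y) - P (D (x * y))) ↔
      ((∀ x y, x * P y = P (D x * P y) + P (x * y) + l • P (D x * y)) ∧
        (∀ x y, P x * y = P (P x * D y) + P (x * y) + l • P (x * D y))) := by
  constructor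
  · intro h
    refine ⟨fun x y => ?_, fun x y => ?_⟩
    · rw [← P_D_mul_P hleib hsec, P_D_mul_P_of_hybrid hsec h]
    · rw [← P_D_P_mul hleib hsec, mul_comm (P x), P_D_mul_P_of_hybrid hsec h]
  · rintro ⟨h₁, h₂⟩
    exact hybrid_of_integration_by_parts hleib hsec h₁ h₂

/-- The hybrid Rota-Baxter axiom holds iff the weighted integration-by-parts
identities hold. -/
theorem stmt_8 {k R : Type*} [CommRing k] [CommRing R] [Algebra k R]
    (l : k) (D P : R →ₗ[k] R)
    (hleib : ∀ x y, D (x * y) = D x * y + x * D y + l • (D x * D y))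
    (hone : D 1 = 0)
    (hsec : ∀ x, D (P x) = x) :
    (∀ x y, P (D x) * P (D y) =
        P (D x) * y + x * P (D y) - P (D (x * y))) ↔
      ((∀ x y, x * P y = P (D x * P y) + P (x * y) + l • P (D x * y)) ∧
        (∀ x y, P x * y = P (P x * D y) + P (x * y) + l • P (x * D y))) :=
  stmt_8_general l D P hleib hsec
end

section
/- Let (R, D, Π) with D a weight-λ derivation, D∘Π = id_R, J = Π∘D, E = id_R − J. Then (R, D, Π) is an integro-differential algebra (satisfies the hybrid Rota-Baxter axiom) if and only if (R, D, Π) is a differential Rota-Baxter algebra and Π(E(x)y) = E(x)Π(y) and Π(xE(y)) = Π(x)E(y) for all x, y ∈ R. -/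
/-!
Write `J = P ∘ D` and `E = id - J`. Since `D ∘ P = id`, every `E x` is a constant (`D (E x) = 0`),
and the hybrid axiom specialises in two useful ways: at `(c, P y)` with `c` a constant it says
`P (c * y) = c * P y`, and at `(P x, P y)` it is the Rota-Baxter identity once `D (P x * P y)` is
expanded by the twisted Leibniz rule. Conversely, writing `x = E x + J x` and expanding `D (x * y)`,
the hybrid axiom is the Rota-Baxter identity for `(D x, D y)` plus the two `E`-linearity identities.
-/

section IntegroDifferential

variable {k R : Type*} [CommRing k] [CommRing R] [Algebra k R] {l : k} {D P : R →ₗ[k] R}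

theorem map_sub_section_map_eq_zero (hsec : ∀ x, D (P x) = x) (x : R) :
    D (x - P (D x)) = 0 := by
  rw [map_sub, hsec, sub_self]

theorem map_mul_section_of_map_eq_zero
    (hleib : ∀ x y, D (x * y) = D x * y + x * D y + l • (D x * D y))
    (hsec : ∀ x, D (P x) = x) {c : R} (hc : D c = 0) (y : R) :
    D (c * P y) = c * y := by
  rw [hleib, hc, hsec, zero_mul, zero_mul, smul_zero, zero_add, add_zero]

theorem map_section_mul_section
    (hleib : ∀ x y, D (x * y) = D x * y + x * D y + l • (D x * D y))
    (hsec : ∀ x, D (P x) = x) (x y : R) :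
    D (P x * P y) = x * P y + P x * y + l • (x * y) := by
  rw [hleib, hsec, hsec]

theorem section_mul_of_hybrid
    (hleib : ∀ x y, D (x * y) = D x * y + x * D y + l • (D x * D y))
    (hsec : ∀ x, D (P x) = x)
    (hhyb : ∀ x y, P (D x) * P (D y) = P (D x) * y + x * P (D y) - P (D (x * y)))
    {c : R} (hc : D c = 0) (y : R) :
    P (c * y) = c * P y := by
  have h := hhyb c (P y)
  rw [map_mul_section_of_map_eq_zero hleib hsec hc, hc, hsec, map_zero, zero_mul] at h
  linear_combination h

theorem rotaBaxter_of_hybrid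
    (hleib : ∀ x y, D (x * y) = D x * y + x * D y + l • (D x * D y))
    (hsec : ∀ x, D (P x) = x)
    (hhyb : ∀ x y, P (D x) * P (D y) = P (D x) * y + x * P (D y) - P (D (x * y)))
    (x y : R) :
    P x * P y = P (x * P y) + P (P x * y) + l • P (x * y) := by
  have h := hhyb (P x) (P y)
  rw [map_section_mul_section hleib hsec, map_add, map_add, map_smul, hsec, hsec] at h
  linear_combination -h

theorem hybrid_of_rotaBaxter
    (hleib : ∀ x y, D (x * y) = D x * y + x * D y + l • (D x * D y))
    (hRB : ∀ x y, P x * P y = P (x * P y) + P (P x * y) + l • P (x * y))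
    (hEl : ∀ x y, P ((x - P (D x)) * y) = (x - P (D x)) * P y)
    (hEr : ∀ x y, P (x * (y - P (D y))) = P x * (y - P (D y))) (x y : R) :
    P (D x) * P (D y) = P (D x) * y + x * P (D y) - P (D (x * y)) := by
  have hr := hEr (D x) y
  have hl := hEl x (D y)
  rw [mul_sub, map_sub] at hr
  rw [sub_mul, map_sub] at hl
  rw [hleib, map_add, map_add, map_smul]
  linear_combination hr + hl - hRB (D x) (D y)

end IntegroDifferential

theorem stmt_9_general {k R : Type*} [CommRing k] [CommRing R] [Algebra k R]
    (l : k) (D P : R →ₗ[k] R)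
    (hleib : ∀ x y, D (x * y) = D x * y + x * D y + l • (D x * D y))
    (hsec : ∀ x, D (P x) = x) :
    (∀ x y, P (D x) * P (D y) =
        P (D x) * y + x * P (D y) - P (D (x * y))) ↔
      ((∀ x y, P x * P y = P (x * P y) + P (P x * y) + l • P (x * y)) ∧
        (∀ x y, P ((x - P (D x)) * y) = (x - P (D x)) * P y) ∧
        (∀ x y, P (x * (y - P (D y))) = P x * (y - P (D y)))) := by
  constructor
  · intro hhyb
    have hEl : ∀ x y, P ((x - P (D x)) * y) = (x - P (D x)) * P y := fun x y =>
      section_mul_of_hybrid hleib hsec hhyb (map_sub_section_map_eq_zero hsec x) y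
    exact ⟨rotaBaxter_of_hybrid hleib hsec hhyb, hEl,
      fun x y => by simpa only [mul_comm] using hEl y x⟩
  · rintro ⟨hRB, hEl, hEr⟩
    exact hybrid_of_rotaBaxter hleib hRB hEl hEr

/-- With J = Π∘D and E = id − J: the hybrid Rota-Baxter axiom holds iff
(R, D, Π) is a differential Rota-Baxter algebra and Π is E-bilinear:
Π(E(x)y) = E(x)Π(y) and Π(xE(y)) = Π(x)E(y). -/
theorem stmt_9 {k R : Type*} [CommRing k] [CommRing R] [Algebra k R]
    (l : k) (D P : R →ₗ[k] R)
    (hleib : ∀ x y, D (x * y) = D x * y + x * D y + l • (D x * D y))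
    (hone : D 1 = 0)
    (hsec : ∀ x, D (P x) = x) :
    (∀ x y, P (D x) * P (D y) =
        P (D x) * y + x * P (D y) - P (D (x * y))) ↔
      ((∀ x y, P x * P y = P (x * P y) + P (P x * y) + l • P (x * y)) ∧
        (∀ x y, P ((x - P (D x)) * y) = (x - P (D x)) * P y) ∧
        (∀ x y, P (x * (y - P (D y))) = P x * (y - P (D y)))) :=
  stmt_9_general l D P hleib hsec
end

section
/- For the derivation D of weight 0 on the ring of differential polynomials A = k{u} = k[u₀, u₁, u₂, …] (with D(u_i) = u_{i+1} extended by the Leibniz rule), if x ∈ A is a nonzero differential polynomial of order k ≥ 0, then D(x) is not a k-linear combination of functional monomials; in particular A_T ∩ im D = 0, where A_T is the k-submodule spanned by functional monomials. -/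
open MvPolynomial

/-- A monomial exponent `α` is functional if its order is at most 0
(i.e. it only involves `u₀`) or the exponent of the highest variable is > 1. -/
def IsFunctionalMono (α : ℕ →₀ ℕ) : Prop :=
  (∀ i, 1 ≤ i → α i = 0) ∨ ∃ m, 1 < α m ∧ ∀ i, m < i → α i = 0

/-- The submodule of a ring of differential polynomials spanned by the
functional monomials. -/
noncomputable def functionalSubmodule (k : Type*) [CommRing k] :
    Submodule k (MvPolynomial ℕ k) :=
  Submodule.span k {p | ∃ α : ℕ →₀ ℕ, IsFunctionalMono α ∧
    p = monomial α (1 : k)}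

/-!
If `u_m` is the highest variable occurring in `x`, then `D x = ∑_{i ≤ m} (∂x/∂u_i) u_{i+1}`, and
the only summand involving `u_{m+1}` is `(∂x/∂u_m) u_{m+1}`, which is nonzero because `k` has no
additive torsion. Its monomials have top variable `u_{m+1}` occurring linearly, so they are not
functional, and they survive in `D x`.
-/

noncomputable def shiftDerivation (R : Type*) [CommSemiring R] :
    Derivation R (MvPolynomial ℕ R) (MvPolynomial ℕ R) :=
  mkDerivation R fun i => X (i + 1)

section General

variable {σ R : Type*} [CommSemiring R]

theorem coeff_eq_zero_of_notMem_vars {p : MvPolynomial σ R} {i : σ} (hi : i ∉ p.vars)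
    {δ : σ →₀ ℕ} (hδ : δ i ≠ 0) : coeff δ p = 0 :=
  notMem_support_iff.mp fun h => hδ (mem_support_notMem_vars_zero h hi)

theorem vars_nonempty_of_notMem_range_C {p : MvPolynomial σ R} (hp : p ∉ Set.range C) :
    p.vars.Nonempty :=
  Finset.nonempty_iff_ne_empty.2 fun h => hp ⟨_, (vars_eq_empty_iff_eq_C.1 h).symm⟩

theorem mkDerivation_eq_sum_pderiv (f : σ → MvPolynomial σ R) {p : MvPolynomial σ R}
    {s : Finset σ} (hs : p.vars ⊆ s) :
    mkDerivation R f p = ∑ i ∈ s, pderiv i p * f i := by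
  have happly (q : MvPolynomial σ R) :
      (∑ i ∈ s, f i • pderiv i) q = ∑ i ∈ s, f i * pderiv i q := by
    rw [← Derivation.coeFnAddMonoidHom_apply, map_sum, Finset.sum_apply]
    rfl
  simp_rw [mul_comm (pderiv _ p), ← happly]
  refine derivation_eq_of_forall_mem_vars fun j hj => ?_
  rw [mkDerivation_X, happly, Finset.sum_eq_single_of_mem j (hs hj)]
  · simp
  · intro i _ hij
    simp [pderiv_X_of_ne hij.symm]

end General

section Shift

variable {R : Type*} [CommSemiring R]

theorem coeff_shiftDerivation_add_single {x : MvPolynomial ℕ R} {m : ℕ}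
    (hx : ∀ i ∈ x.vars, i ≤ m) {β : ℕ →₀ ℕ} (hβ : β (m + 1) = 0) :
    coeff (β + Finsupp.single (m + 1) 1) (shiftDerivation R x) = coeff β (pderiv m x) := by
  classical
  have hvars : x.vars ⊆ Finset.range (m + 1) := fun i hi =>
    Finset.mem_range.2 (Nat.lt_succ_of_le (hx i hi))
  have hlow : ∀ i < m, coeff (β + Finsupp.single (m + 1) 1) (pderiv i x * X (i + 1)) = 0 := by
    intro i hi
    rw [coeff_mul_X']
    split_ifs
    · have hm : m + 1 ∉ x.vars := fun h => absurd (hx _ h) (by omega)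
      rw [coeff_pderiv, coeff_eq_zero_of_notMem_vars hm, zero_mul]
      simp [Finsupp.single_apply, hβ, hi.ne]
    · rfl
  rw [shiftDerivation, mkDerivation_eq_sum_pderiv _ hvars, Finset.sum_range_succ, coeff_add,
    coeff_sum, Finset.sum_eq_zero fun i hi => hlow i (Finset.mem_range.1 hi), zero_add, coeff_mul_X]

theorem not_isFunctionalMono_add_single {β : ℕ →₀ ℕ} {n : ℕ} (hn : 0 < n)
    (hβ : ∀ j, n ≤ j → β j = 0) : ¬ IsFunctionalMono (β + Finsupp.single n 1) := by
  rintro (hlow | ⟨i, hi, htop⟩)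
  · simpa [hβ n le_rfl] using hlow n hn
  · rcases lt_trichotomy i n with h | rfl | h
    · simpa [hβ n le_rfl] using htop n h
    · simp [hβ i le_rfl] at hi
    · simp [hβ i h.le, h.ne] at hi

theorem exists_not_isFunctionalMono_coeff_shiftDerivation_ne_zero [IsAddTorsionFree R]
    {x : MvPolynomial ℕ R} (hx : x.vars.Nonempty) :
    ∃ γ, ¬ IsFunctionalMono γ ∧ coeff γ (shiftDerivation R x) ≠ 0 := by
  set m := x.vars.max' hx
  have hm : ∀ i ∈ x.vars, i ≤ m := fun i hi => x.vars.le_max' i hi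
  obtain ⟨α, hα, hαm⟩ := (mem_vars_iff_mem_support m).1 (x.vars.max'_mem hx)
  set β := α - Finsupp.single m 1
  have hβ : ∀ j, m + 1 ≤ j → β j = 0 := fun j hj => by
    have : α j = 0 := mem_support_notMem_vars_zero hα fun h => absurd (hm j h) (by omega)
    simp [β, this]
  refine ⟨β + Finsupp.single (m + 1) 1, not_isFunctionalMono_add_single m.succ_pos hβ, ?_⟩
  have hαβ : β + Finsupp.single m 1 = α :=
    tsub_add_cancel_of_le (Finsupp.single_le_iff.2 (Nat.one_le_iff_ne_zero.2
      (Finsupp.mem_support_iff.1 hαm)))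
  have hβm : (β m : R) + 1 = (α m : R) := by
    rw [← hαβ]; simp
  rw [coeff_shiftDerivation_add_single hm (hβ _ le_rfl), coeff_pderiv, hαβ, hβm, mul_comm,
    ← nsmul_eq_mul]
  exact smul_ne_zero (Finsupp.mem_support_iff.1 hαm) (mem_support_iff.1 hα)

end Shift

theorem coeff_eq_zero_of_mem_functionalSubmodule {k : Type*} [CommRing k] {γ : ℕ →₀ ℕ}
    (hγ : ¬ IsFunctionalMono γ) {p : MvPolynomial ℕ k} (hp : p ∈ functionalSubmodule k) :
    coeff γ p = 0 := by
  suffices functionalSubmodule k ≤ LinearMap.ker (lcoeff k γ) from this hp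
  refine Submodule.span_le.2 ?_
  rintro _ ⟨α, hα, rfl⟩
  rw [SetLike.mem_coe, LinearMap.mem_ker, lcoeff_apply, coeff_monomial, if_neg]
  rintro rfl
  exact hγ hα

/-- For the weight-0 derivation D on k{u}: if x is not a constant (i.e. has
order ≥ 0), then D(x) is not a linear combination of functional monomials;
in particular A_T ∩ im D = 0. -/
theorem stmt_14 {k : Type*} [CommRing k] [Algebra ℚ k] :
    (∀ x : MvPolynomial ℕ k,
      x ∉ Set.range (MvPolynomial.C : k →+* MvPolynomial ℕ k) →
      (MvPolynomial.mkDerivation k (fun i => (X (i + 1) : MvPolynomial ℕ k))) x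
        ∉ functionalSubmodule k) ∧
    functionalSubmodule k ⊓
      LinearMap.range
        (MvPolynomial.mkDerivation k
          (fun i => (X (i + 1) : MvPolynomial ℕ k))).toLinearMap = ⊥ := by
  have := IsAddTorsionFree.of_module_rat k
  have notMem : ∀ x : MvPolynomial ℕ k, x ∉ Set.range C →
      shiftDerivation k x ∉ functionalSubmodule k := by
    intro x hx hmem
    obtain ⟨γ, hγ, hne⟩ :=
      exists_not_isFunctionalMono_coeff_shiftDerivation_ne_zero (vars_nonempty_of_notMem_range_C hx)
    exact hne (coeff_eq_zero_of_mem_functionalSubmodule hγ hmem)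
  refine ⟨notMem, eq_bot_iff.2 ?_⟩
  rintro _ ⟨hT, x, rfl⟩
  by_cases hx : x ∈ Set.range C
  · obtain ⟨c, rfl⟩ := hx
    exact (Submodule.mem_bot k).2 (derivation_C _ c)
  · exact absurd hT (notMem x hx)
end

section
/- Let A be a commutative k-algebra and DA the algebra of λ-Hurwitz series over A, i.e., functions f: ℕ → A with product (fg)(n) = Σ_{k=0}^{n} Σ_{j=0}^{n−k} C(n,k) C(n−k,j) λ^k f(n−j) g(k+j), with derivation (D f)(n) = f(n+1) and integral (Π f)(n) = f(n−1) for n ≥ 1, (Π f)(0) = 0. Then (DA, D, Π) is an integro-differential algebra of weight λ: D∘Π = id and Π(D(f))Π(D(g)) = Π(D(f))g + fΠ(D(g)) − Π(D(fg)) for all f, g. -/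
/-!
`Π ∘ D` only kills the value at `0`. In the `n`-th coefficient of a λ-Hurwitz product every
term is a product `f (n - j) * g (m + j)`, and for `n ≠ 0` the two indices never vanish
together; off `(0, 0)` the identity `f' a * g' b = f' a * g b + f a * g' b - f a * g b`
(with `f'`, `g'` the series with value at `0` killed) holds termwise. At `n = 0` both sides
vanish.
-/

/-- The λ-Hurwitz product on A^ℕ:
(fg)(n) = Σ_{k=0}^{n} Σ_{j=0}^{n−k} C(n,k) C(n−k,j) λ^k f(n−j) g(k+j). -/
def hurwitzMul {R A : Type*} [CommRing R] [CommRing A] [Algebra R A]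
    (l : R) (f g : ℕ → A) : ℕ → A :=
  fun n => ∑ m ∈ Finset.range (n + 1), ∑ j ∈ Finset.range (n - m + 1),
    (n.choose m * (n - m).choose j) • (l ^ m • (f (n - j) * g (m + j)))

/-- The derivation on λ-Hurwitz series: (D f)(n) = f(n+1). -/
def hurwitzDer {A : Type*} (f : ℕ → A) : ℕ → A := fun n => f (n + 1)

/-- The integral on λ-Hurwitz series: (Π f)(n) = f(n−1) for n ≥ 1, and
(Π f)(0) = 0. -/
def hurwitzInt {A : Type*} [Zero A] (f : ℕ → A) : ℕ → A :=
  fun n => if n = 0 then 0 else f (n - 1)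

section

variable {A : Type*}

theorem hurwitzDer_hurwitzInt [Zero A] (f : ℕ → A) : hurwitzDer (hurwitzInt f) = f := by
  funext n
  simp [hurwitzDer, hurwitzInt]

theorem hurwitzInt_hurwitzDer_apply [Zero A] (f : ℕ → A) (n : ℕ) :
    hurwitzInt (hurwitzDer f) n = if n = 0 then 0 else f n := by
  cases n <;> simp [hurwitzInt, hurwitzDer]

theorem hurwitzInt_hurwitzDer_mul_hurwitzInt_hurwitzDer_apply [NonUnitalNonAssocRing A]
    (f g : ℕ → A) {a b : ℕ} (h : a ≠ 0 ∨ b ≠ 0) :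
    hurwitzInt (hurwitzDer f) a * hurwitzInt (hurwitzDer g) b =
      hurwitzInt (hurwitzDer f) a * g b + f a * hurwitzInt (hurwitzDer g) b - f a * g b := by
  simp only [hurwitzInt_hurwitzDer_apply]
  rcases h with h | h <;> simp [h]

end

section

variable {R A : Type*} [CommRing R] [CommRing A] [Algebra R A] (l : R)

theorem hurwitzMul_apply_zero (f g : ℕ → A) : hurwitzMul l f g 0 = f 0 * g 0 := by
  simp [hurwitzMul]

theorem hurwitzMul_hurwitzInt_hurwitzDer_apply (f g : ℕ → A) {n : ℕ} (hn : n ≠ 0) :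
    hurwitzMul l (hurwitzInt (hurwitzDer f)) (hurwitzInt (hurwitzDer g)) n =
      hurwitzMul l (hurwitzInt (hurwitzDer f)) g n
        + hurwitzMul l f (hurwitzInt (hurwitzDer g)) n - hurwitzMul l f g n := by
  simp only [hurwitzMul, ← Finset.sum_add_distrib, ← Finset.sum_sub_distrib, ← smul_add,
    ← smul_sub]
  refine Finset.sum_congr rfl fun m _ => Finset.sum_congr rfl fun j _ => ?_
  rw [hurwitzInt_hurwitzDer_mul_hurwitzInt_hurwitzDer_apply f g (by omega)]

end

/-- The λ-Hurwitz series over A form an integro-differential algebra of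
weight λ: D∘Π = id and the hybrid Rota-Baxter axiom holds. -/
theorem stmt_18 {R A : Type*} [CommRing R] [CommRing A] [Algebra R A]
    (l : R) :
    (∀ f : ℕ → A, hurwitzDer (hurwitzInt f) = f) ∧
    (∀ f g : ℕ → A,
      hurwitzMul l (hurwitzInt (hurwitzDer f)) (hurwitzInt (hurwitzDer g)) =
        fun n =>
          hurwitzMul l (hurwitzInt (hurwitzDer f)) g n
            + hurwitzMul l f (hurwitzInt (hurwitzDer g)) n
            - hurwitzInt (hurwitzDer (hurwitzMul l f g)) n) := by
  refine ⟨hurwitzDer_hurwitzInt, fun f g => funext fun n => ?_⟩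
  rcases eq_or_ne n 0 with rfl | hn
  · simp [hurwitzMul_apply_zero, hurwitzInt_hurwitzDer_apply]
  · rw [hurwitzInt_hurwitzDer_apply, if_neg hn]
    exact hurwitzMul_hurwitzInt_hurwitzDer_apply l f g hn
end

section
/- Let A = ℂ[y]/(y⁴) and R = A[x] with the standard derivation d (d(x^k) = k x^{k−1}, d(y) = 0). Define P(f) = Π(f) + f(0,0)y², where Π is the usual integral with Π(x^k) = x^{k+1}/(k+1) extended A-linearly and f(0,0) denotes the coefficient evaluation at x = y = 0. Then (R, d, P) is a differential Rota-Baxter algebra of weight 0 (d∘P = id and P(f)P(g) = P(fP(g)) + P(P(f)g)), but it is not an integro-differential algebra: P(d(x))P(d(y)) ≠ P(d(x))y + xP(d(y)) − P(d(xy)), the difference being y³. -/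
/-!
Since `P` is a right inverse of `d` and `A` is torsion-free, a polynomial in `A[x]` is determined
by its derivative and its constant term, so by the Leibniz rule the Rota-Baxter identity reduces
to constant terms. These lie in `ℂ y²`, which is killed both by squaring (`y⁴ = 0`) and by
evaluation at `y = 0`, so both sides have constant term `0`. The hybrid axiom fails because
`P(1) = x + y²` carries the extra `y²`, which against `y` leaves `y³ ≠ 0`.
-/

open Polynomial

/-- The truncated polynomial ring A = ℂ[y]/(y⁴). -/
noncomputable abbrev TruncA : Type :=
  Polynomial ℂ ⧸ Ideal.span ({(X : Polynomial ℂ) ^ 4} : Set (Polynomial ℂ))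

/-- The image of y in A = ℂ[y]/(y⁴). -/
noncomputable def yA : TruncA :=
  Ideal.Quotient.mk _ (X : Polynomial ℂ)

/-- Evaluation at y = 0 of elements of A = ℂ[y]/(y⁴). -/
noncomputable def evY0 : TruncA →ₐ[ℂ] ℂ :=
  Ideal.Quotient.liftₐ _ (Polynomial.aeval (0 : ℂ)) (by
    intro a ha
    rw [Ideal.mem_span_singleton'] at ha
    obtain ⟨c, rfl⟩ := ha
    simp)

/-- The usual A-linear integral on A[x], with Π(x^k) = x^{k+1}/(k+1). -/
noncomputable def intX (f : Polynomial TruncA) : Polynomial TruncA :=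
  f.sum fun n a => C ((((n : ℂ) + 1)⁻¹) • a) * X ^ (n + 1)

/-- The modified integral P(f) = Π(f) + f(0,0) y². -/
noncomputable def modInt (f : Polynomial TruncA) : Polynomial TruncA :=
  intX f + C (evY0 (f.coeff 0) • (yA ^ 2))

namespace Polynomial

variable {R : Type*}

theorem eq_of_derivative_eq_of_coeff_zero_eq [Ring R] [IsAddTorsionFree R] {p q : R[X]}
    (hd : derivative p = derivative q) (h0 : p.coeff 0 = q.coeff 0) : p = q := by
  have hC := eq_C_of_derivative_eq_zero (p := p - q) (by rw [map_sub, hd, sub_self])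
  rwa [coeff_sub, h0, sub_self, C_0, sub_eq_zero] at hC

theorem rotaBaxter_of_derivative_rightInverse [CommRing R] [IsAddTorsionFree R]
    {P : R[X] → R[X]} (hP : ∀ f, derivative (P f) = f) {f g : R[X]}
    (h0 : (P f * P g).coeff 0 = (P (f * P g) + P (P f * g)).coeff 0) :
    P f * P g = P (f * P g) + P (P f * g) :=
  eq_of_derivative_eq_of_coeff_zero_eq (by rw [derivative_mul, hP, hP, map_add, hP, hP]) h0

end Polynomial

instance : IsAddTorsionFree TruncA := .of_isTorsionFree ℂ TruncA

theorem evY0_yA : evY0 yA = 0 := by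
  simp [evY0, yA]

theorem yA_pow_four : yA ^ 4 = 0 := by
  rw [yA, ← map_pow, Ideal.Quotient.eq_zero_iff_mem]
  exact Ideal.subset_span rfl

theorem yA_pow_three_ne_zero : yA ^ 3 ≠ 0 := by
  rw [yA, ← map_pow, Ne, Ideal.Quotient.eq_zero_iff_mem, Ideal.mem_span_singleton]
  intro h
  simpa using natDegree_le_of_dvd h (pow_ne_zero 3 X_ne_zero)

theorem derivative_intX (f : TruncA[X]) : derivative (intX f) = f := by
  conv_rhs => rw [← sum_C_mul_X_pow_eq f]
  rw [intX, sum_def, sum_def, map_sum]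
  refine Finset.sum_congr rfl fun n _ => ?_
  have hn : ((n : TruncA) + 1) = algebraMap ℂ TruncA ((n : ℂ) + 1) := by simp
  rw [derivative_C_mul, derivative_X_pow, Nat.add_sub_cancel, Nat.cast_add, Nat.cast_one,
    ← mul_assoc, ← C_mul, hn, ← Algebra.commutes, ← Algebra.smul_def, smul_smul,
    mul_inv_cancel₀ (Nat.cast_add_one_ne_zero n), one_smul]

theorem coeff_zero_intX (f : TruncA[X]) : (intX f).coeff 0 = 0 := by
  rw [intX, sum_def, finsetSum_coeff]
  exact Finset.sum_eq_zero fun n _ => by simp [coeff_X_pow]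

theorem intX_C (a : TruncA) : intX (C a) = C a * X := by
  rw [intX, sum_C_index] <;> simp

theorem derivative_modInt (f : TruncA[X]) : derivative (modInt f) = f := by
  rw [modInt, map_add, derivative_intX, derivative_C, add_zero]

theorem coeff_zero_modInt (f : TruncA[X]) :
    (modInt f).coeff 0 = evY0 (f.coeff 0) • yA ^ 2 := by
  rw [modInt, coeff_add, coeff_zero_intX, coeff_C_zero, zero_add]

theorem modInt_C (a : TruncA) : modInt (C a) = C a * X + C (evY0 a • yA ^ 2) := by
  rw [modInt, intX_C, coeff_C_zero]

theorem evY0_coeff_zero_modInt (f : TruncA[X]) : evY0 ((modInt f).coeff 0) = 0 := by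
  rw [coeff_zero_modInt, map_smul, map_pow, evY0_yA, zero_pow two_ne_zero, smul_zero]

theorem coeff_zero_modInt_mul_modInt (f g : TruncA[X]) :
    (modInt f * modInt g).coeff 0 = 0 := by
  rw [mul_coeff_zero, coeff_zero_modInt, coeff_zero_modInt, smul_mul_smul_comm, ← pow_add,
    yA_pow_four, smul_zero]

theorem modInt_mul_modInt (f g : TruncA[X]) :
    modInt f * modInt g = modInt (f * modInt g) + modInt (modInt f * g) := by
  refine rotaBaxter_of_derivative_rightInverse derivative_modInt ?_
  rw [coeff_zero_modInt_mul_modInt, coeff_add, coeff_zero_modInt, coeff_zero_modInt,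
    mul_coeff_zero, mul_coeff_zero, map_mul, map_mul, evY0_coeff_zero_modInt g,
    evY0_coeff_zero_modInt f, mul_zero, zero_mul, zero_smul, add_zero]

theorem hybrid_defect_X_yA :
    (modInt (derivative (X : TruncA[X])) * C yA
        + X * modInt (derivative (C yA))
        - modInt (derivative ((X : TruncA[X]) * C yA)))
      - modInt (derivative (X : TruncA[X])) * modInt (derivative (C yA))
      = C (yA ^ 3) := by
  have hP0 : modInt 0 = 0 := by simpa using modInt_C 0
  have hP1 : modInt 1 = X + C (yA ^ 2) := by simpa using modInt_C 1
  have hPy : modInt (C yA) = C yA * X := by simpa [evY0_yA] using modInt_C yA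
  rw [derivative_X, derivative_C, derivative_mul, derivative_X, derivative_C, mul_zero,
    add_zero, one_mul, hP0, hP1, hPy]
  simp only [C_pow]
  ring

/-- (A[x], d, P) is a differential Rota-Baxter algebra of weight 0 but not an
integro-differential algebra: the hybrid Rota-Baxter axiom fails for
(x, y), the difference being y³. -/
theorem stmt_19 :
    (∀ f : Polynomial TruncA, derivative (modInt f) = f) ∧
    (∀ f g : Polynomial TruncA,
      modInt f * modInt g = modInt (f * modInt g) + modInt (modInt f * g)) ∧
    modInt (derivative (X : Polynomial TruncA)) * modInt (derivative (C yA))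
      ≠ modInt (derivative (X : Polynomial TruncA)) * C yA
        + X * modInt (derivative (C yA))
        - modInt (derivative ((X : Polynomial TruncA) * C yA)) ∧
    (modInt (derivative (X : Polynomial TruncA)) * C yA
        + X * modInt (derivative (C yA))
        - modInt (derivative ((X : Polynomial TruncA) * C yA)))
      - modInt (derivative (X : Polynomial TruncA)) * modInt (derivative (C yA))
      = C (yA ^ 3) := by
  refine ⟨derivative_modInt, modInt_mul_modInt, fun h => ?_, hybrid_defect_X_yA⟩
  have hdefect := hybrid_defect_X_yA
  rw [← h, sub_self, eq_comm, C_eq_zero] at hdefect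
  exact yA_pow_three_ne_zero hdefect
end
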